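/- Let S = ∞ and m satisfy (M), and for δ ∈ (0, δ̄) with δ̄ < sup m define z_δ as the unique solution of m(z) = δ, m_δ(z) := m(z + z_δ) − δ, f_δ(z) := ∫₀^z √(2/m_δ(r)) dr, and g_δ := f_δ^{−1} : [0,∞) → [0,∞). Then there exists a constant C > 0, independent of δ, such that g_δ(w) ≤ e^{Cw} − 1 for all w ≥ 0 and all δ ∈ (0, δ̄). -/

import Mathlib

/-!
A positive concave function on `(0, ∞)` is nondecreasing, and it grows at most linearly past any
point: with `z̄ > 0` such that `m z̄ > δ̄`, one gets `m_δ r ≤ m (z̄ + r) ≤ K (1 + r)` for a constant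
`K` built from `m` near `z̄` alone. Hence the integrand of `f_δ` is at least `(C (1 + r))⁻¹` with
`C = √(K / 2)`, so `w = f_δ (g_δ w) ≥ C⁻¹ log (1 + g_δ w)`, i.e. `g_δ w ≤ exp (C w) - 1`.
-/

open MeasureTheory Set Filter Topology

theorem ContDiffOn.concaveOn_of_deriv2_nonpos {D : Set ℝ} {f : ℝ → ℝ} (hD : Convex ℝ D)
    (hDo : IsOpen D) (hf : ContDiffOn ℝ 2 f D) (hf'' : ∀ x ∈ D, deriv (deriv f) x ≤ 0) :
    ConcaveOn ℝ D f :=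
  concaveOn_of_deriv2_nonpos' hD (hf.differentiableOn two_ne_zero)
    ((hf.deriv_of_isOpen (m := 1) hDo le_rfl).differentiableOn one_ne_zero) hf''

theorem ConcaveOn.le_add_slope_mul {s : Set ℝ} {f : ℝ → ℝ} {a b y : ℝ} (hf : ConcaveOn ℝ s f)
    (ha : a ∈ s) (hy : y ∈ s) (hab : a < b) (hby : b ≤ y) :
    f y ≤ f b + slope f a b * (y - b) := by
  rcases hby.eq_or_lt with rfl | hby
  · simp
  have h := hf.slope_anti_adjacent ha hy hab hby
  rw [div_le_iff₀ (sub_pos.2 hby)] at h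
  rw [slope_def_field]
  linarith

theorem ConcaveOn.monotoneOn_of_bddBelow {f : ℝ → ℝ} {a : ℝ} (hf : ConcaveOn ℝ (Ioi a) f)
    (hbdd : BddBelow (f '' Ioi a)) : MonotoneOn f (Ioi a) := by
  intro x hx y hy hxy
  by_contra! hyx
  obtain ⟨c, hc⟩ := hbdd
  have hxy : x < y := hxy.lt_of_ne (by rintro rfl; exact hyx.false)
  have hs : slope f x y < 0 := by
    rw [slope_def_field]; exact div_neg_of_neg_of_pos (by linarith) (by linarith)
  have hcy : c ≤ f y := hc (mem_image_of_mem f hy)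
  -- far enough to the right, the secant line through `x` and `y` lies below `c`
  set t := y + (f y - c) / -slope f x y + 1 with ht_def
  have hyt : y ≤ t := by
    have : 0 ≤ (f y - c) / -slope f x y := div_nonneg (by linarith) (by linarith)
    linarith
  have ht : t ∈ Ioi a := lt_of_lt_of_le hy hyt
  have hline := hf.le_add_slope_mul hx ht hxy hyt
  have : slope f x y * (t - y) = -(f y - c) + slope f x y := by
    rw [ht_def]; field_simp [hs.ne]; ring
  linarith [hc (mem_image_of_mem f ht)]

theorem ConcaveOn.lt_of_monotoneOn {s : Set ℝ} {f : ℝ → ℝ} {x y z : ℝ} (hf : ConcaveOn ℝ s f)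
    (hmono : MonotoneOn f s) (hx : x ∈ s) (hy : y ∈ s) (hz : z ∈ s) (hfxy : f x < f y)
    (hxz : x < z) : f x < f z := by
  rcases le_or_gt y z with hyz | hzy
  · exact hfxy.trans_le (hmono hy hz hyz)
  have hxy : x < y := lt_of_not_ge fun hyx ↦ (hmono hy hx hyx).not_gt hfxy
  by_contra! hzx
  have hseg : z ∈ openSegment ℝ x y := by rw [openSegment_eq_Ioo hxy]; exact ⟨hxz, hzy⟩
  exact (hf.right_le_of_le_left hx hy hseg hzx).not_gt (hzx.trans_lt hfxy)

theorem integral_Ioo_inv_one_add {z : ℝ} (hz : 0 ≤ z) :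
    ∫ r in Ioo (0 : ℝ) z, (1 + r)⁻¹ = Real.log (1 + z) := by
  rw [← integral_Ioc_eq_integral_Ioo, ← intervalIntegral.integral_of_le hz,
    intervalIntegral.integral_comp_add_left (fun x : ℝ ↦ x⁻¹) 1,
    integral_inv (by rw [uIcc_of_le (by linarith)]; intro h; linarith [h.1])]
  simp

theorem inv_mul_one_add_le_sqrt_two_div {K M r : ℝ} (hK : 0 < K) (hr : 0 ≤ r) (hM : 0 < M)
    (hMK : M ≤ K * (1 + r)) : (√(K / 2) * (1 + r))⁻¹ ≤ √(2 / M) := by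
  rw [Real.le_sqrt (by positivity) (by positivity), inv_pow, mul_pow,
    Real.sq_sqrt (by positivity), inv_le_comm₀ (by positivity) (by positivity), inv_div,
    div_le_iff₀ (by norm_num)]
  nlinarith

theorem log_one_add_le_mul_integral_sqrt_two_div {M : ℝ → ℝ} {K z : ℝ} (hK : 0 < K)
    (hz : 0 ≤ z) (hM : ∀ r ∈ Ioo 0 z, 0 < M r ∧ M r ≤ K * (1 + r))
    (hint : IntegrableOn (fun r ↦ √(2 / M r)) (Ioo 0 z)) :
    Real.log (1 + z) ≤ √(K / 2) * ∫ r in Ioo 0 z, √(2 / M r) := by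
  have hC : 0 < √(K / 2) := by positivity
  have hcont : ContinuousOn (fun r : ℝ ↦ (√(K / 2) * (1 + r))⁻¹) (Icc 0 z) :=
    ContinuousOn.inv₀ (by fun_prop) fun r hr ↦ by have := hr.1; positivity
  calc Real.log (1 + z) = √(K / 2) * ∫ r in Ioo 0 z, (√(K / 2) * (1 + r))⁻¹ := by
        simp_rw [mul_inv]
        rw [integral_const_mul, integral_Ioo_inv_one_add hz, mul_inv_cancel_left₀ hC.ne']
    _ ≤ √(K / 2) * ∫ r in Ioo 0 z, √(2 / M r) := by
        refine mul_le_mul_of_nonneg_left (setIntegral_mono_on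
          (hcont.integrableOn_Icc.mono_set Ioo_subset_Icc_self) hint measurableSet_Ioo
          fun r hr ↦ ?_) hC.le
        exact inv_mul_one_add_le_sqrt_two_div hK hr.1.le (hM r hr).1 (hM r hr).2

theorem ConcaveOn.apply_add_le_mul_one_add {f : ℝ → ℝ} {c a b x r : ℝ}
    (hf : ConcaveOn ℝ (Ioi c) f) (hmono : MonotoneOn f (Ioi c)) (hb : b ∈ Ioi c) (hba : b < a)
    (hfa : 0 ≤ f a) (hx : x ∈ Ioi c) (hxa : x ≤ a) (hr : 0 ≤ r) :
    f (r + x) ≤ (f a + slope f b a) * (1 + r) := by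
  have ha : a ∈ Ioi c := lt_trans hb hba
  have har : a + r ∈ Ioi c := lt_add_of_lt_of_nonneg ha hr
  have hslope : 0 ≤ slope f b a := hmono.slope_nonneg hb ha
  calc f (r + x) ≤ f (a + r) := hmono (lt_add_of_nonneg_of_lt hr hx) har (by linarith)
    _ ≤ f a + slope f b a * (a + r - a) := hf.le_add_slope_mul hb har hba (by linarith)
    _ ≤ (f a + slope f b a) * (1 + r) := by rw [add_sub_cancel_left]; nlinarith

theorem gronwall_bound_on_inverse_general
    (m : ℝ → ℝ)
    (hm_c2 : ContDiffOn ℝ 2 m (Ioi 0))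
    (hm_pos : ∀ z : ℝ, 0 < z → 0 < m z)
    (hm_conc : ∀ z : ℝ, 0 < z → deriv (deriv m) z ≤ 0)
    (δbar : ℝ)
    (hδbarsup : ∃ z : ℝ, 0 < z ∧ δbar < m z) :
    ∃ C : ℝ, 0 < C ∧
      ∀ δ ∈ Ioo (0 : ℝ) δbar, ∀ zδ : ℝ, 0 < zδ → m zδ = δ →
        ∀ g : ℝ → ℝ,
          (∀ z : ℝ, 0 ≤ z →
            g (∫ r in Ioo (0 : ℝ) z, Real.sqrt (2 / (m (r + zδ) - δ))) = z) →
          (∀ w : ℝ, 0 ≤ w → 0 ≤ g w ∧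
            (∫ r in Ioo (0 : ℝ) (g w), Real.sqrt (2 / (m (r + zδ) - δ))) = w) →
          ∀ w : ℝ, 0 ≤ w → g w ≤ Real.exp (C * w) - 1 := by
  obtain ⟨zs, hzs, hδbar_lt⟩ := hδbarsup
  have hconc : ConcaveOn ℝ (Ioi 0) m :=
    hm_c2.concaveOn_of_deriv2_nonpos (convex_Ioi 0) isOpen_Ioi hm_conc
  have hmono : MonotoneOn m (Ioi 0) :=
    hconc.monotoneOn_of_bddBelow ⟨0, by rintro _ ⟨x, hx, rfl⟩; exact (hm_pos x hx).le⟩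
  have hhalf : zs / 2 ∈ Ioi (0 : ℝ) := half_pos hzs
  have hK : 0 < m zs + slope m (zs / 2) zs :=
    add_pos_of_pos_of_nonneg (hm_pos zs hzs) (hmono.slope_nonneg hhalf hzs)
  refine ⟨√((m zs + slope m (zs / 2) zs) / 2), by positivity,
    fun δ ⟨hδ, hδbar⟩ zδ hzδ hmzδ g hg_zero hg_inv w hw ↦ ?_⟩
  obtain ⟨hgw, hint⟩ := hg_inv w hw
  by_cases hF : IntegrableOn (fun r ↦ √(2 / (m (r + zδ) - δ))) (Ioo 0 (g w))
  · have hzδs : zδ < zs := hmono.reflect_lt hzδ hzs (by linarith)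
    have hM : ∀ r ∈ Ioo 0 (g w), 0 < m (r + zδ) - δ ∧
        m (r + zδ) - δ ≤ (m zs + slope m (zs / 2) zs) * (1 + r) := by
      rintro r ⟨hr, -⟩
      have hgrowth := hconc.apply_add_le_mul_one_add hmono hhalf (half_lt_self hzs)
        (hm_pos zs hzs).le hzδ hzδs.le hr.le
      refine ⟨sub_pos.2 ?_, by linarith⟩
      rw [← hmzδ]
      exact hconc.lt_of_monotoneOn hmono hzδ hzs (add_pos hr hzδ) (by linarith) (by linarith)
    have hlog := log_one_add_le_mul_integral_sqrt_two_div hK hgw hM hF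
    rw [hint, Real.log_le_iff_le_exp (by linarith)] at hlog
    linarith
  -- a non-integrable integrand has Bochner integral `0`
  · have hw0 : w = 0 := by rw [← hint, integral_undef hF]
    subst hw0
    simpa using (hg_zero 0 le_rfl).le

/-- Let `S = ∞`, `m` satisfy (M), and for `δ ∈ (0,δ̄)` with `δ̄ < sup m`
let `z_δ` be the unique solution of `m(z) = δ`, `m_δ(z) := m(z + z_δ) − δ`,
`f_δ(z) := ∫₀^z √(2/m_δ(r)) dr` and `g_δ := f_δ⁻¹ : [0,∞) → [0,∞)`. Then there is a
constant `C > 0`, independent of `δ`, with `g_δ(w) ≤ e^{Cw} − 1` for all `w ≥ 0` and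
all `δ ∈ (0,δ̄)`. -/
theorem gronwall_bound_on_inverse
    (m : ℝ → ℝ)
    (hm_c2 : ContDiffOn ℝ 2 m (Ioi 0))
    (hm_pos : ∀ z : ℝ, 0 < z → 0 < m z)
    (hm_conc : ∀ z : ℝ, 0 < z → deriv (deriv m) z ≤ 0)
    (hm0 : Tendsto m (𝓝[>] (0 : ℝ)) (𝓝 0))
    (δbar : ℝ) (hδbar : 0 < δbar)
    (hδbarsup : ∃ z : ℝ, 0 < z ∧ δbar < m z) :
    ∃ C : ℝ, 0 < C ∧
      ∀ δ ∈ Ioo (0 : ℝ) δbar, ∀ zδ : ℝ, 0 < zδ → m zδ = δ →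
        ∀ g : ℝ → ℝ,
          (∀ z : ℝ, 0 ≤ z →
            g (∫ r in Ioo (0 : ℝ) z, Real.sqrt (2 / (m (r + zδ) - δ))) = z) →
          (∀ w : ℝ, 0 ≤ w → 0 ≤ g w ∧
            (∫ r in Ioo (0 : ℝ) (g w), Real.sqrt (2 / (m (r + zδ) - δ))) = w) →
          ∀ w : ℝ, 0 ≤ w → g w ≤ Real.exp (C * w) - 1 :=
  gronwall_bound_on_inverse_general m hm_c2 hm_pos hm_conc δbar hδbarsup
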